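/- arXiv:1811.00636 — 2 statements merged into one kernel-verified Lean document; each statement's English description precedes it below -/
import Mathlib

section
/- Let 0 < ε < 1/2, σ ≥ 0, and α > 0 with (1−2ε)α > 1. Let D and W be Borel probability measures on ℝ^d with finite second moments, means μ_D and μ_W, and suppose that for every unit vector u one has E_{X∼D}[⟨X−μ_D,u⟩²] ≤ σ² and E_{X∼W}[⟨X−μ_W,u⟩²] ≤ σ². Let Δ = μ_D − μ_W and μ_F = (1−ε)μ_D + εμ_W. If u is a unit vector with |⟨u,Δ⟩| ≥ α·σ/√ε, then, setting t = ε|⟨Δ,u⟩| + σ/√ε, one has Pr_{X∼D}[|⟨X−μ_F,u⟩| > t] ≤ ε and Pr_{X∼W}[|⟨X−μ_F,u⟩| < t] ≤ ε/((1−2ε)α − 1)². -/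
open MeasureTheory RealInnerProductSpace

/-!
Write `β = ⟪Δ, u⟫`. Centering at `μF` instead of `μD` shifts the projection onto `u` by `εβ`,
and centering at `μF` instead of `μW` shifts it by `-(1 - ε)β`. A clean point beyond `t`
therefore deviates from `μD` by more than `σ/√ε`, and a poisoned point within `t` deviates
from `μW` by more than `(1 - 2ε)|β| - σ/√ε ≥ ((1 - 2ε)α - 1)σ/√ε`; Chebyshev's inequality
along `u` bounds both events.
-/

/-- The strict threshold lets the degenerate case `a = 0` through: there `∫ f ^ 2 = 0` forces
`f = 0` a.e. -/
theorem measure_lt_abs_le_of_integral_sq_le {Ω : Type*} [MeasurableSpace Ω] (μ : Measure Ω)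
    [IsFiniteMeasure μ] {f : Ω → ℝ} (hf : MemLp f 2 μ) {a c : ℝ} (ha : 0 ≤ a)
    (hfc : ∫ x, f x ^ 2 ∂μ ≤ c * a ^ 2) :
    μ {x | a < |f x|} ≤ ENNReal.ofReal c := by
  rcases ha.eq_or_lt with rfl | ha
  · have hf0 : ∀ᵐ x ∂μ, f x ^ 2 = 0 :=
      (integral_eq_zero_iff_of_nonneg (fun x => sq_nonneg (f x)) hf.integrable_sq).mp
        (le_antisymm (by simpa using hfc) (integral_nonneg fun x => sq_nonneg (f x)))
    refine (measure_mono_null (fun x hx => ?_) hf0).trans_le bot_le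
    simp_all
  · have hsub : {x | a < |f x|} ⊆ {x | a ^ 2 ≤ f x ^ 2} := fun x hx => by
      simpa only [Set.mem_ofPred_eq, sq_abs] using pow_le_pow_left₀ ha.le hx.le 2
    have hmarkov := mul_meas_ge_le_integral_of_nonneg
      (ae_of_all μ fun x => sq_nonneg (f x)) hf.integrable_sq (a ^ 2)
    have hreal : μ.real {x | a ^ 2 ≤ f x ^ 2} ≤ c :=
      le_of_mul_le_mul_left (by linarith) (by positivity : 0 < a ^ 2)
    exact (measure_mono hsub).trans ((ENNReal.le_ofReal_iff_toReal_le (measure_ne_top _ _)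
      (measureReal_nonneg.trans hreal)).mpr hreal)

section Mixture

variable {E : Type*} [NormedAddCommGroup E] [InnerProductSpace ℝ E]

theorem inner_sub_mix_eq_inner_sub_left_add (ε : ℝ) (x p q u : E) :
    ⟪x - ((1 - ε) • p + ε • q), u⟫ = ⟪x - p, u⟫ + ε * ⟪p - q, u⟫ := by
  simp only [inner_sub_left, inner_add_left, real_inner_smul_left]
  ring

theorem inner_sub_mix_eq_inner_sub_right_sub (ε : ℝ) (x p q u : E) :
    ⟪x - ((1 - ε) • p + ε • q), u⟫ = ⟪x - q, u⟫ - (1 - ε) * ⟪p - q, u⟫ := by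
  simp only [inner_sub_left, inner_add_left, real_inner_smul_left]
  ring

end Mixture

theorem lt_abs_of_abs_add_mul_gt {ε β s y : ℝ} (hε : 0 ≤ ε) (h : ε * |β| + s < |y + ε * β|) :
    s < |y| := by
  have := abs_add_le y (ε * β)
  rw [abs_mul, abs_of_nonneg hε] at this
  linarith

theorem sub_lt_abs_of_abs_sub_mul_lt {ε β s y : ℝ} (hε : ε ≤ 1)
    (h : |y - (1 - ε) * β| < ε * |β| + s) :
    (1 - 2 * ε) * |β| - s < |y| := by
  have := abs_sub_abs_le_abs_sub ((1 - ε) * β) y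
  rw [abs_mul, abs_of_nonneg (by linarith : 0 ≤ 1 - ε), abs_sub_comm] at this
  linarith

theorem correlation_implies_separation_general {d : ℕ} (ε σ α : ℝ)
    (hε : 0 < ε) (hε2 : ε < 1 / 2) (hσ : 0 ≤ σ)
    (hα2 : (1 - 2 * ε) * α > 1)
    (D W : Measure (EuclideanSpace ℝ (Fin d)))
    [IsProbabilityMeasure D] [IsProbabilityMeasure W]
    (hD2 : MemLp (id : EuclideanSpace ℝ (Fin d) → EuclideanSpace ℝ (Fin d)) 2 D)
    (hW2 : MemLp (id : EuclideanSpace ℝ (Fin d) → EuclideanSpace ℝ (Fin d)) 2 W)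
    (μD μW : EuclideanSpace ℝ (Fin d))
    (hDcov : ∀ u : EuclideanSpace ℝ (Fin d), ‖u‖ = 1 →
      ∫ x, ⟪x - μD, u⟫ ^ 2 ∂D ≤ σ ^ 2)
    (hWcov : ∀ u : EuclideanSpace ℝ (Fin d), ‖u‖ = 1 →
      ∫ x, ⟪x - μW, u⟫ ^ 2 ∂W ≤ σ ^ 2)
    (Δ μF : EuclideanSpace ℝ (Fin d))
    (hΔ : Δ = μD - μW) (hμF : μF = (1 - ε) • μD + ε • μW)
    (u : EuclideanSpace ℝ (Fin d)) (hu : ‖u‖ = 1)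
    (hcorr : |⟪u, Δ⟫| ≥ α * σ / Real.sqrt ε)
    (t : ℝ) (ht : t = ε * |⟪Δ, u⟫| + σ / Real.sqrt ε) :
    D {x | |⟪x - μF, u⟫| > t} ≤ ENNReal.ofReal ε ∧
    W {x | |⟪x - μF, u⟫| < t} ≤ ENNReal.ofReal (ε / ((1 - 2 * ε) * α - 1) ^ 2) := by
  subst hΔ hμF ht
  rw [real_inner_comm] at hcorr
  have hs : σ ^ 2 = ε * (σ / √ε) ^ 2 := by
    rw [div_pow, Real.sq_sqrt hε.le, mul_div_cancel₀ _ hε.ne']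
  have hk : 0 < (1 - 2 * ε) * α - 1 := by linarith
  have hfD : MemLp (fun x => ⟪x - μD, u⟫) 2 D := (hD2.sub (memLp_const μD)).inner_const u
  have hfW : MemLp (fun x => ⟪x - μW, u⟫) 2 W := (hW2.sub (memLp_const μW)).inner_const u
  constructor
  · refine (measure_mono fun x hx => ?_).trans <| measure_lt_abs_le_of_integral_sq_le D hfD
      (by positivity) ((hDcov u hu).trans_eq hs)
    rw [Set.mem_ofPred_eq, inner_sub_mix_eq_inner_sub_left_add] at hx
    exact lt_abs_of_abs_add_mul_gt hε.le hx
  · have hWcov' : ∫ x, ⟪x - μW, u⟫ ^ 2 ∂W ≤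
        ε / ((1 - 2 * ε) * α - 1) ^ 2 * (((1 - 2 * ε) * α - 1) * (σ / √ε)) ^ 2 := by
      rw [mul_pow, ← mul_assoc, div_mul_cancel₀ _ (pow_ne_zero 2 hk.ne'), ← hs]
      exact hWcov u hu
    refine (measure_mono fun x hx => ?_).trans <|
      measure_lt_abs_le_of_integral_sq_le W hfW (by positivity) hWcov'
    rw [Set.mem_ofPred_eq, inner_sub_mix_eq_inner_sub_right_sub] at hx
    have hβ : ((1 - 2 * ε) * α - 1) * (σ / √ε) ≤ (1 - 2 * ε) * |⟪μD - μW, u⟫| - σ / √ε := by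
      linear_combination mul_le_mul_of_nonneg_left hcorr (by linarith : 0 ≤ 1 - 2 * ε)
    exact hβ.trans_lt (sub_lt_abs_of_abs_sub_mul_lt (by linarith) hx)

/-- **Lemma 2.** Any unit vector `u` sufficiently correlated with the mean shift
`Δ = μD − μW` separates the clean population `D` from the poisoned population `W`
after centering at the mixture mean `μF`, at the threshold `t = ε|⟨Δ,u⟩| + σ/√ε`. -/
theorem correlation_implies_separation {d : ℕ} (ε σ α : ℝ)
    (hε : 0 < ε) (hε2 : ε < 1 / 2) (hσ : 0 ≤ σ) (hα : 0 < α)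
    (hα2 : (1 - 2 * ε) * α > 1)
    (D W : Measure (EuclideanSpace ℝ (Fin d)))
    [IsProbabilityMeasure D] [IsProbabilityMeasure W]
    (hD2 : MemLp (id : EuclideanSpace ℝ (Fin d) → EuclideanSpace ℝ (Fin d)) 2 D)
    (hW2 : MemLp (id : EuclideanSpace ℝ (Fin d) → EuclideanSpace ℝ (Fin d)) 2 W)
    (μD μW : EuclideanSpace ℝ (Fin d))
    (hμD : μD = (∫ x, x ∂D)) (hμW : μW = (∫ x, x ∂W))
    (hDcov : ∀ u : EuclideanSpace ℝ (Fin d), ‖u‖ = 1 →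
      ∫ x, ⟪x - μD, u⟫ ^ 2 ∂D ≤ σ ^ 2)
    (hWcov : ∀ u : EuclideanSpace ℝ (Fin d), ‖u‖ = 1 →
      ∫ x, ⟪x - μW, u⟫ ^ 2 ∂W ≤ σ ^ 2)
    (Δ μF : EuclideanSpace ℝ (Fin d))
    (hΔ : Δ = μD - μW) (hμF : μF = (1 - ε) • μD + ε • μW)
    (u : EuclideanSpace ℝ (Fin d)) (hu : ‖u‖ = 1)
    (hcorr : |⟪u, Δ⟫| ≥ α * σ / Real.sqrt ε)
    (t : ℝ) (ht : t = ε * |⟪Δ, u⟫| + σ / Real.sqrt ε) :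
    D {x | |⟪x - μF, u⟫| > t} ≤ ENNReal.ofReal ε ∧
    W {x | |⟪x - μF, u⟫| < t} ≤ ENNReal.ofReal (ε / ((1 - 2 * ε) * α - 1) ^ 2) :=
  correlation_implies_separation_general ε σ α hε hε2 hσ hα2 D W hD2 hW2 μD μW hDcov hWcov Δ μF hΔ
    hμF u hu hcorr t ht
end

section
/- Let 0 < ε < 1/2 and σ ≥ 0. Let D and W be Borel probability measures on ℝ^d with finite second moments, means μ_D and μ_W, and suppose that for every unit vector u one has E_{X∼D}[⟨X−μ_D,u⟩²] ≤ σ² and E_{X∼W}[⟨X−μ_W,u⟩²] ≤ σ². Let Δ = μ_D − μ_W, let F = (1−ε)D + εW with mean μ_F and covariance matrix Σ_F = E_{X∼F}[(X−μ_F)(X−μ_F)ᵀ], and let v be a unit vector attaining vᵀΣ_F v = max_{‖u‖₂=1} uᵀΣ_F u. If ‖Δ‖₂² ≥ 6σ²/ε, then ⟨v,Δ⟩² ≥ 2σ²/ε. -/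
/-!
Along a unit vector `u`, the quadratic form of `Σ_F` is the second moment of `⟪X - μF, u⟫` under
`F`. Splitting it over the two components and recentring each at its own mean, using
`μD - μF = εΔ` and `μW - μF = -(1 - ε)Δ`, gives
`uᵀ Σ_F u = (1 - ε) Var_D(u) + ε Var_W(u) + ε(1 - ε) ⟪Δ, u⟫²`.
Comparing `v` with `u = Δ / ‖Δ‖` and bounding both variances by `σ²` yields
`ε(1 - ε)(‖Δ‖² - ⟪Δ, v⟫²) ≤ σ²`, and with `1 - ε > 1/2` and `ε‖Δ‖² ≥ 6σ²` this gives the claim.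
-/

open MeasureTheory RealInnerProductSpace

section Mixture

variable {α G : Type*} [MeasurableSpace α] [NormedAddCommGroup G] {μ ν : Measure α}

theorem memLp_two_add_measure {f : α → G} (hμ : MemLp f 2 μ) (hν : MemLp f 2 ν) :
    MemLp f 2 (μ + ν) :=
  (memLp_two_iff_integrable_sq_norm (hμ.1.add_measure hν.1)).2
    ((hμ.integrable_norm_pow two_ne_zero).add_measure (hν.integrable_norm_pow two_ne_zero))

theorem integral_ofReal_smul_add_ofReal_smul_measure [NormedSpace ℝ G] {f : α → G}
    (hμ : Integrable f μ) (hν : Integrable f ν) {a b : ℝ} (ha : 0 ≤ a) (hb : 0 ≤ b) :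
    ∫ x, f x ∂(ENNReal.ofReal a • μ + ENNReal.ofReal b • ν) =
      a • ∫ x, f x ∂μ + b • ∫ x, f x ∂ν := by
  rw [integral_add_measure (hμ.smul_measure ENNReal.ofReal_ne_top)
      (hν.smul_measure ENNReal.ofReal_ne_top), integral_smul_measure, integral_smul_measure,
    ENNReal.toReal_ofReal ha, ENNReal.toReal_ofReal hb]

end Mixture

section InnerProductSpace

variable {E : Type*} [NormedAddCommGroup E] [InnerProductSpace ℝ E]

theorem exists_norm_eq_one_inner_sq_eq_norm_sq {v : E} (hv : ‖v‖ = 1) (w : E) :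
    ∃ u : E, ‖u‖ = 1 ∧ ⟪w, u⟫ ^ 2 = ‖w‖ ^ 2 := by
  by_cases hw : w = 0
  · exact ⟨v, hv, by simp [hw]⟩
  · refine ⟨‖w‖⁻¹ • w, norm_smul_inv_norm hw, ?_⟩
    rw [real_inner_smul_right, real_inner_self_eq_norm_sq]
    field_simp

variable [CompleteSpace E] [MeasurableSpace E]

theorem integral_inner_sub_sq {μ : Measure E} [IsProbabilityMeasure μ] (hμ : MemLp id 2 μ)
    (c u : E) :
    ∫ x, ⟪x - c, u⟫ ^ 2 ∂μ = ∫ x, ⟪x - ∫ y, y ∂μ, u⟫ ^ 2 ∂μ + ⟪(∫ y, y ∂μ) - c, u⟫ ^ 2 := by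
  set m := ∫ y, y ∂μ
  have hid : Integrable (fun x : E => x) μ := hμ.integrable one_le_two
  have hcentered : Integrable (fun x : E => x - m) μ := hid.sub (integrable_const m)
  have hproj : MemLp (fun x : E => ⟪x - m, u⟫) 2 μ := (hμ.sub (memLp_const m)).inner_const u
  have hmean : ∫ x, ⟪x - m, u⟫ ∂μ = 0 := by
    simp_rw [real_inner_comm u]
    rw [integral_inner hcentered, integral_sub hid (integrable_const m)]
    simp [m]
  have hsplit (x : E) :
      ⟪x - c, u⟫ ^ 2 = ⟪x - m, u⟫ ^ 2 + 2 * ⟪m - c, u⟫ * ⟪x - m, u⟫ + ⟪m - c, u⟫ ^ 2 := by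
    rw [← sub_add_sub_cancel x m c, inner_add_left]; ring
  rw [integral_congr_ae (.of_forall hsplit)]
  have hcross : Integrable (fun x => 2 * ⟪m - c, u⟫ * ⟪x - m, u⟫) μ :=
    (hproj.integrable one_le_two).const_mul _
  have hsq : Integrable (fun x => ⟪x - m, u⟫ ^ 2) μ := hproj.integrable_sq
  rw [integral_add (f := fun x => ⟪x - m, u⟫ ^ 2 + 2 * ⟪m - c, u⟫ * ⟪x - m, u⟫)
      (hsq.add hcross) (integrable_const _), integral_add hsq hcross, integral_const_mul, hmean]
  simp

theorem integral_inner_sub_sq_mixture {D W : Measure E} [IsProbabilityMeasure D]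
    [IsProbabilityMeasure W] (hD : MemLp id 2 D) (hW : MemLp id 2 W) {ε : ℝ} (hε₀ : 0 ≤ ε)
    (hε₁ : ε ≤ 1) (u : E) :
    ∫ x, ⟪x - ((1 - ε) • ∫ y, y ∂D + ε • ∫ y, y ∂W), u⟫ ^ 2
        ∂(ENNReal.ofReal (1 - ε) • D + ENNReal.ofReal ε • W) =
      (1 - ε) * ∫ x, ⟪x - ∫ y, y ∂D, u⟫ ^ 2 ∂D + ε * ∫ x, ⟪x - ∫ y, y ∂W, u⟫ ^ 2 ∂W
        + ε * (1 - ε) * ⟪(∫ y, y ∂D) - ∫ y, y ∂W, u⟫ ^ 2 := by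
  set mD := ∫ y, y ∂D
  set mW := ∫ y, y ∂W
  set m := (1 - ε) • mD + ε • mW
  have hsq {μ : Measure E} [IsProbabilityMeasure μ] (hμ : MemLp id 2 μ) :
      Integrable (fun x => ⟪x - m, u⟫ ^ 2) μ :=
    ((hμ.sub (memLp_const m)).inner_const u).integrable_sq
  have hDm : mD - m = ε • (mD - mW) := by module
  have hWm : mW - m = -(1 - ε) • (mD - mW) := by module
  rw [integral_ofReal_smul_add_ofReal_smul_measure (hsq hD) (hsq hW) (by linarith) hε₀,
    integral_inner_sub_sq hD, integral_inner_sub_sq hW, hDm, hWm, real_inner_smul_left,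
    real_inner_smul_left, smul_eq_mul, smul_eq_mul]
  ring

end InnerProductSpace

theorem sum_mul_integral_mul_mul_eq_integral_inner_sq {α ι : Type*} [MeasurableSpace α]
    [Fintype ι] {μ : Measure α} {g : α → EuclideanSpace ℝ ι} (hg : MemLp g 2 μ)
    (u : EuclideanSpace ℝ ι) :
    ∑ i, ∑ j, u i * (∫ x, g x i * g x j ∂μ) * u j = ∫ x, ⟪g x, u⟫ ^ 2 ∂μ := by
  have hcoord (i : ι) : MemLp (fun x => g x i) 2 μ :=
    (EuclideanSpace.proj (𝕜 := ℝ) i).comp_memLp' hg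
  have hprod (i j : ι) : Integrable (fun x => u i * u j * (g x i * g x j)) μ :=
    ((hcoord i).integrable_mul (hcoord j)).const_mul _
  have hinner (x : α) : ⟪g x, u⟫ ^ 2 = ∑ i, ∑ j, u i * u j * (g x i * g x j) := by
    rw [PiLp.inner_apply, sq, Finset.sum_mul_sum]
    simp only [RCLike.inner_apply, conj_trivial]
    exact Finset.sum_congr rfl fun i _ => Finset.sum_congr rfl fun j _ => by ring
  simp_rw [hinner]
  rw [integral_finsetSum _ fun i _ => integrable_finsetSum _ fun j _ => hprod i j]
  refine Finset.sum_congr rfl fun i _ => ?_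
  rw [integral_finsetSum _ fun j _ => hprod i j]
  refine Finset.sum_congr rfl fun j _ => ?_
  rw [integral_const_mul]
  ring

theorem top_eigenvector_correlation_general {d : ℕ} (ε σ : ℝ)
    (hε : 0 < ε) (hε2 : ε < 1 / 2)
    (D W : Measure (EuclideanSpace ℝ (Fin d)))
    [IsProbabilityMeasure D] [IsProbabilityMeasure W]
    (hD2 : MemLp (id : EuclideanSpace ℝ (Fin d) → EuclideanSpace ℝ (Fin d)) 2 D)
    (hW2 : MemLp (id : EuclideanSpace ℝ (Fin d) → EuclideanSpace ℝ (Fin d)) 2 W)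
    (μD μW : EuclideanSpace ℝ (Fin d))
    (hμD : μD = (∫ x, x ∂D)) (hμW : μW = (∫ x, x ∂W))
    (hDcov : ∀ u : EuclideanSpace ℝ (Fin d), ‖u‖ = 1 →
      ∫ x, ⟪x - μD, u⟫ ^ 2 ∂D ≤ σ ^ 2)
    (hWcov : ∀ u : EuclideanSpace ℝ (Fin d), ‖u‖ = 1 →
      ∫ x, ⟪x - μW, u⟫ ^ 2 ∂W ≤ σ ^ 2)
    (Δ : EuclideanSpace ℝ (Fin d)) (hΔ : Δ = μD - μW)
    (F : Measure (EuclideanSpace ℝ (Fin d)))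
    (hF : F = ENNReal.ofReal (1 - ε) • D + ENNReal.ofReal ε • W)
    (μF : EuclideanSpace ℝ (Fin d)) (hμF : μF = (1 - ε) • μD + ε • μW)
    (SigmaF : Matrix (Fin d) (Fin d) ℝ)
    (hSigmaF : SigmaF = Matrix.of fun i j => ∫ x, (x i - μF i) * (x j - μF j) ∂F)
    (v : EuclideanSpace ℝ (Fin d)) (hv : ‖v‖ = 1)
    (hvmax : ∀ u : EuclideanSpace ℝ (Fin d), ‖u‖ = 1 →
      ∑ i, ∑ j, u i * SigmaF i j * u j ≤ ∑ i, ∑ j, v i * SigmaF i j * v j)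
    (hsep : ‖Δ‖ ^ 2 ≥ 6 * σ ^ 2 / ε) :
    ⟪v, Δ⟫ ^ 2 ≥ 2 * σ ^ 2 / ε := by
  have hε₁ : ε ≤ 1 := by linarith
  have hFcentered : MemLp (fun x => x - μF) 2 F := by
    rw [hF]
    exact memLp_two_add_measure ((hD2.sub (memLp_const μF)).smul_measure ENNReal.ofReal_ne_top)
      ((hW2.sub (memLp_const μF)).smul_measure ENNReal.ofReal_ne_top)
  have hQ (u : EuclideanSpace ℝ (Fin d)) : ∑ i, ∑ j, u i * SigmaF i j * u j =
      (1 - ε) * ∫ x, ⟪x - μD, u⟫ ^ 2 ∂D + ε * ∫ x, ⟪x - μW, u⟫ ^ 2 ∂W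
        + ε * (1 - ε) * ⟪Δ, u⟫ ^ 2 := by
    simp only [hSigmaF, Matrix.of_apply, ← PiLp.sub_apply]
    rw [sum_mul_integral_mul_mul_eq_integral_inner_sq hFcentered, hF, hμF, hΔ, hμD, hμW,
      integral_inner_sub_sq_mixture hD2 hW2 hε.le hε₁]
  obtain ⟨u, hu, hΔu⟩ := exists_norm_eq_one_inner_sq_eq_norm_sq hv Δ
  have hlow : ε * (1 - ε) * ‖Δ‖ ^ 2 ≤ ∑ i, ∑ j, v i * SigmaF i j * v j := by
    refine le_trans ?_ (hvmax u hu)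
    rw [hQ, hΔu]
    have hVD : 0 ≤ ∫ x, ⟪x - μD, u⟫ ^ 2 ∂D := integral_nonneg fun x => sq_nonneg _
    have hVW : 0 ≤ ∫ x, ⟪x - μW, u⟫ ^ 2 ∂W := integral_nonneg fun x => sq_nonneg _
    nlinarith
  have hup : ∑ i, ∑ j, v i * SigmaF i j * v j ≤ σ ^ 2 + ε * (1 - ε) * ⟪Δ, v⟫ ^ 2 := by
    rw [hQ]
    nlinarith [mul_le_mul_of_nonneg_left (hDcov v hv) (sub_nonneg.2 hε₁),
      mul_le_mul_of_nonneg_left (hWcov v hv) hε.le]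
  rw [ge_iff_le, div_le_iff₀ hε] at hsep
  rw [real_inner_comm, ge_iff_le, div_le_iff₀ hε]
  nlinarith [sq_nonneg σ]

/-- **Lemma 3.** If `‖Δ‖² ≥ 6σ²/ε`, then any top unit eigenvector `v` of the covariance
matrix of the mixture `F = (1−ε)D + εW` satisfies `⟨v,Δ⟩² ≥ 2σ²/ε`. -/
theorem top_eigenvector_correlation {d : ℕ} (ε σ : ℝ)
    (hε : 0 < ε) (hε2 : ε < 1 / 2) (hσ : 0 ≤ σ)
    (D W : Measure (EuclideanSpace ℝ (Fin d)))
    [IsProbabilityMeasure D] [IsProbabilityMeasure W]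
    (hD2 : MemLp (id : EuclideanSpace ℝ (Fin d) → EuclideanSpace ℝ (Fin d)) 2 D)
    (hW2 : MemLp (id : EuclideanSpace ℝ (Fin d) → EuclideanSpace ℝ (Fin d)) 2 W)
    (μD μW : EuclideanSpace ℝ (Fin d))
    (hμD : μD = (∫ x, x ∂D)) (hμW : μW = (∫ x, x ∂W))
    (hDcov : ∀ u : EuclideanSpace ℝ (Fin d), ‖u‖ = 1 →
      ∫ x, ⟪x - μD, u⟫ ^ 2 ∂D ≤ σ ^ 2)
    (hWcov : ∀ u : EuclideanSpace ℝ (Fin d), ‖u‖ = 1 →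
      ∫ x, ⟪x - μW, u⟫ ^ 2 ∂W ≤ σ ^ 2)
    (Δ : EuclideanSpace ℝ (Fin d)) (hΔ : Δ = μD - μW)
    (F : Measure (EuclideanSpace ℝ (Fin d)))
    (hF : F = ENNReal.ofReal (1 - ε) • D + ENNReal.ofReal ε • W)
    (μF : EuclideanSpace ℝ (Fin d)) (hμF : μF = (1 - ε) • μD + ε • μW)
    (SigmaF : Matrix (Fin d) (Fin d) ℝ)
    (hSigmaF : SigmaF = Matrix.of fun i j => ∫ x, (x i - μF i) * (x j - μF j) ∂F)
    (v : EuclideanSpace ℝ (Fin d)) (hv : ‖v‖ = 1)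
    (hvmax : ∀ u : EuclideanSpace ℝ (Fin d), ‖u‖ = 1 →
      ∑ i, ∑ j, u i * SigmaF i j * u j ≤ ∑ i, ∑ j, v i * SigmaF i j * v j)
    (hsep : ‖Δ‖ ^ 2 ≥ 6 * σ ^ 2 / ε) :
    ⟪v, Δ⟫ ^ 2 ≥ 2 * σ ^ 2 / ε :=
  top_eigenvector_correlation_general ε σ hε hε2 D W hD2 hW2 μD μW hμD hμW hDcov hWcov Δ hΔ F hF μF
    hμF SigmaF hSigmaF v hv hvmax hsep
end
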